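/- For every integer r ≥ −1, the sequence of real numbers n ↦ B_{(n+1)d+r}/B_{nd+r} converges as n → ∞ to −D_d·β. -/

import Mathlib

/-!
Over one period the recursion is the product `A ν = M (ν + d) ⋯ M (ν + 1)` of the transfer matrices
`M i = !![b i, a i; 1, 0]`, which sends `(B ν, B (ν - 1))` to `(B (ν + d), B (ν + d - 1))`.
Periodicity gives `A (ν + d) = A ν`, and moving the base point by one turns `X * M` into `M * X`,
so every `A ν` (`ν ≥ 0`) has characteristic polynomial `z² - C_d z - D_d`. By Cayley–Hamilton each
`n ↦ B (n d + r)` solves `y (n + 2) = C_d y (n + 1) + D_d y n`, whose characteristic roots are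
`λ = -D_d β` and `μ = -D_d α` with `|μ| < λ`; its ratios tend to `λ` unless `y 1 = μ y 0`. This is
excluded because the entry `A 0 0` of a `2 × 2` matrix with `A 0 1 * A 1 0 > 0` lies strictly
between its eigenvalues.
-/

open Matrix Filter Topology

section OrderedProd

variable {α : Type*} [Monoid α] (M : ℤ → α)

/-- `orderedProd M ν k = M (ν + k) * ⋯ * M (ν + 1)`. -/
def orderedProd (ν : ℤ) : ℕ → α
  | 0 => 1
  | k + 1 => M (ν + k + 1) * orderedProd ν k

theorem orderedProd_succ' (ν : ℤ) (k : ℕ) :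
    orderedProd M ν (k + 1) = orderedProd M (ν + 1) k * M (ν + 1) := by
  induction k with
  | zero => simp [orderedProd]
  | succ k ih =>
    rw [orderedProd, ih, orderedProd, mul_assoc]
    push_cast
    ring_nf

variable {M}

theorem orderedProd_add_period {d : ℕ} {ν : ℤ} (hM : ∀ μ, ν < μ → M (μ + d) = M μ) (k : ℕ) :
    orderedProd M (ν + d) k = orderedProd M ν k := by
  induction k with
  | zero => rfl
  | succ k ih =>
    rw [orderedProd, orderedProd, ih, ← hM (ν + k + 1) (by omega)]
    ring_nf

end OrderedProd

section Charpoly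

variable {n R : Type*} [Fintype n] [DecidableEq n] [CommRing R]

theorem trace_eq_of_charpoly_eq [Nonempty n] {A A' : Matrix n n R}
    (h : A.charpoly = A'.charpoly) : A.trace = A'.trace := by
  rw [trace_eq_neg_charpoly_coeff, h, ← trace_eq_neg_charpoly_coeff]

theorem det_eq_of_charpoly_eq {A A' : Matrix n n R} (h : A.charpoly = A'.charpoly) :
    A.det = A'.det := by
  rw [det_eq_sign_charpoly_coeff, h, ← det_eq_sign_charpoly_coeff]

variable {M : ℤ → Matrix n n R} {d : ℕ}

theorem charpoly_orderedProd_add_one (hd : 1 ≤ d) {ν : ℤ} (hM : M (ν + 1 + d) = M (ν + 1)) :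
    (orderedProd M (ν + 1) d).charpoly = (orderedProd M ν d).charpoly := by
  obtain ⟨e, rfl⟩ := Nat.exists_eq_add_of_le' hd
  rw [orderedProd_succ' M ν e, charpoly_mul_comm, orderedProd, ← hM]
  push_cast
  ring_nf

theorem charpoly_orderedProd_eq (hd : 1 ≤ d) {ν₀ : ℤ} (hM : ∀ μ, ν₀ < μ → M (μ + d) = M μ)
    {ν : ℤ} (hν : ν₀ ≤ ν) : (orderedProd M ν d).charpoly = (orderedProd M ν₀ d).charpoly := by
  induction ν, hν using Int.leInduction with
  | base => rfl
  | succ ν hν ih => rw [charpoly_orderedProd_add_one hd (hM _ (by omega)), ih]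

end Charpoly

theorem mulVec_mulVec_self_fin_two {R : Type*} [CommRing R] (A : Matrix (Fin 2) (Fin 2) R)
    (v : Fin 2 → R) : A *ᵥ (A *ᵥ v) = A.trace • (A *ᵥ v) - A.det • v := by
  ext i
  fin_cases i <;>
  · simp only [mulVec_fin_two, trace_fin_two, det_fin_two, Pi.sub_apply, Pi.smul_apply,
      smul_eq_mul, Fin.zero_eta, Fin.mk_one, cons_val_zero, cons_val_one, cons_val_fin_one]
    ring

theorem lt_apply_zero_zero_of_add_eq_trace {R : Type*} [CommRing R] [LinearOrder R]
    [IsStrictOrderedRing R] {A : Matrix (Fin 2) (Fin 2) R} {l m : R} (hsum : l + m = A.trace)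
    (hprod : l * m = A.det) (hml : m ≤ l) (hA : 0 < A 0 1 * A 1 0) : m < A 0 0 := by
  rw [trace_fin_two] at hsum
  rw [det_fin_two] at hprod
  have : (A 0 0 - m) * (A 0 0 - l) = -(A 0 1 * A 1 0) := by
    linear_combination (-A 0 0) * hsum + hprod
  nlinarith

theorem tendsto_succ_div_of_recurrence {𝕜 : Type*} [NormedField 𝕜] {l m : 𝕜} (hml : ‖m‖ < ‖l‖)
    {y : ℕ → 𝕜} (hy : ∀ n, y (n + 2) = (l + m) * y (n + 1) - l * m * y n)
    (h₁ : y 1 ≠ m * y 0) : Tendsto (fun n ↦ y (n + 1) / y n) atTop (𝓝 l) := by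
  have hl : l ≠ 0 := norm_pos_iff.mp ((norm_nonneg m).trans_lt hml)
  set z := y 1 - m * y 0
  set w := y 1 - l * y 0
  have hz : ∀ n, y (n + 1) - m * y n = l ^ n * z := by
    intro n
    induction n with
    | zero => simp [z]
    | succ n ih => rw [hy, pow_succ]; linear_combination l * ih
  have hw : ∀ n, y (n + 1) - l * y n = m ^ n * w := by
    intro n
    induction n with
    | zero => simp [w]
    | succ n ih => rw [hy, pow_succ]; linear_combination m * ih
  have hz0 : z ≠ 0 := by simpa [z, sub_eq_zero] using h₁
  have hq : Tendsto (fun n ↦ (m / l) ^ n) atTop (𝓝 0) := by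
    refine tendsto_pow_atTop_nhds_zero_of_norm_lt_one ?_
    rwa [norm_div, div_lt_one (norm_pos_iff.mpr hl)]
  have hlim : Tendsto (fun n ↦ (l * z - m * ((m / l) ^ n * w)) / (z - (m / l) ^ n * w)) atTop
      (𝓝 ((l * z - m * (0 * w)) / (z - 0 * w))) :=
    ((tendsto_const_nhds.sub ((hq.mul_const w).const_mul m)).div
      (tendsto_const_nhds.sub (hq.mul_const w)) (by simpa using hz0))
  rw [zero_mul, mul_zero, sub_zero, sub_zero, mul_div_cancel_right₀ _ hz0] at hlim
  refine hlim.congr fun n ↦ ?_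
  have hden : (l - m) * y n = l ^ n * (z - (m / l) ^ n * w) := by
    rw [div_pow]
    field_simp
    linear_combination hz n - hw n
  have hnum : (l - m) * y (n + 1) = l ^ n * (l * z - m * ((m / l) ^ n * w)) := by
    rw [div_pow]
    field_simp
    linear_combination l * hz n - m * hw n
  have hlm : l - m ≠ 0 := sub_ne_zero.mpr fun h ↦ hml.ne (h ▸ rfl)
  rw [← mul_div_mul_left (y (n + 1)) (y n) hlm, hnum, hden,
    mul_div_mul_left _ _ (pow_ne_zero n hl)]

section Continuant

variable {R : Type*} [CommRing R] {a b B : ℤ → R} {d : ℕ}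

variable (a b) in
def transfer (ν : ℤ) : Matrix (Fin 2) (Fin 2) R := !![b ν, a ν; 1, 0]

theorem transfer_add_period (hpa : ∀ ν, 1 ≤ ν → a (ν + d) = a ν)
    (hpb : ∀ ν, 1 ≤ ν → b (ν + d) = b ν) (ν : ℤ) (hν : 0 < ν) :
    transfer a b (ν + d) = transfer a b ν := by
  rw [transfer, transfer, hpa ν hν, hpb ν hν]

theorem orderedProd_transfer_mulVec {ν : ℤ}
    (hB : ∀ μ, ν < μ → B μ = b μ * B (μ - 1) + a μ * B (μ - 2)) (k : ℕ) :
    orderedProd (transfer a b) ν k *ᵥ ![B ν, B (ν - 1)] = ![B (ν + k), B (ν + k - 1)] := by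
  induction k with
  | zero => simp [orderedProd]
  | succ k ih =>
    rw [orderedProd, ← mulVec_mulVec, ih, Nat.cast_succ, ← add_assoc,
      hB (ν + k + 1) (by omega), add_sub_cancel_right, show ν + k + 1 - 2 = ν + k - 1 by ring]
    ext i
    fin_cases i <;> simp [transfer, mulVec, dotProduct, Fin.sum_univ_two]

theorem det_orderedProd_transfer (ν : ℤ) (k : ℕ) :
    (orderedProd (transfer a b) ν k).det = (-1) ^ k * ∏ i ∈ Finset.range k, a (ν + i + 1) := by
  induction k with
  | zero => simp [orderedProd]
  | succ k ih =>
    rw [orderedProd, det_mul, ih, transfer, det_fin_two_of, Finset.prod_range_succ, pow_succ]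
    ring

theorem continuant_add_two_period (hd : 1 ≤ d) (hpa : ∀ ν, 1 ≤ ν → a (ν + d) = a ν)
    (hpb : ∀ ν, 1 ≤ ν → b (ν + d) = b ν)
    (hB : ∀ ν, 1 ≤ ν → B ν = b ν * B (ν - 1) + a ν * B (ν - 2)) {μ : ℤ} (hμ : -1 ≤ μ) :
    B (μ + 2 * d) = (orderedProd (transfer a b) 0 d).trace * B (μ + d)
      - (orderedProd (transfer a b) 0 d).det * B μ := by
  set A := fun ν ↦ orderedProd (transfer a b) ν d
  have hstep : ∀ ν, 0 ≤ ν → A ν *ᵥ ![B ν, B (ν - 1)] = ![B (ν + d), B (ν + d - 1)] :=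
    fun ν hν ↦ orderedProd_transfer_mulVec (fun μ hμ ↦ hB μ (by omega)) d
  have hchar : ∀ ν, 0 ≤ ν → (A ν).charpoly = (A 0).charpoly :=
    fun ν hν ↦ charpoly_orderedProd_eq hd (transfer_add_period hpa hpb) hν
  have hvec : ∀ ν, 0 ≤ ν → ![B (ν + 2 * d), B (ν + 2 * d - 1)] =
      (A 0).trace • ![B (ν + d), B (ν + d - 1)] - (A 0).det • ![B ν, B (ν - 1)] := by
    intro ν hν
    have hA : A (ν + d) = A ν :=
      orderedProd_add_period (fun μ hμ ↦ transfer_add_period hpa hpb μ (by omega)) d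
    have := mulVec_mulVec_self_fin_two (A ν) ![B ν, B (ν - 1)]
    rwa [hstep ν hν, ← hA, hstep (ν + d) (by omega), hA, trace_eq_of_charpoly_eq (hchar ν hν),
      det_eq_of_charpoly_eq (hchar ν hν), add_assoc, ← two_mul] at this
  rcases hμ.eq_or_lt with rfl | hμ
  · simpa [A, neg_add_eq_sub] using congrFun (hvec 0 le_rfl) 1
  · simpa [A] using congrFun (hvec μ (by omega)) 0

theorem trace_orderedProd_transfer_zero [IsDomain R] (hd : 1 ≤ d)
    (hpa : ∀ ν, 1 ≤ ν → a (ν + d) = a ν) (hpb : ∀ ν, 1 ≤ ν → b (ν + d) = b ν)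
    (hB : ∀ ν, 1 ≤ ν → B ν = b ν * B (ν - 1) + a ν * B (ν - 2)) (hBm1 : B (-1) = 0)
    (hBd : B (d - 1) ≠ 0) {C : R} (hC : B (d - 1) * C = B (2 * d - 1)) :
    (orderedProd (transfer a b) 0 d).trace = C := by
  have h := continuant_add_two_period hd hpa hpb hB le_rfl
  rw [neg_add_eq_sub, neg_add_eq_sub, hBm1, mul_zero, sub_zero, ← hC, mul_comm] at h
  exact (mul_right_cancel₀ hBd h).symm

theorem det_orderedProd_transfer_zero (hd : 1 ≤ d) :
    (orderedProd (transfer a b) 0 d).det = -((-1) ^ (d - 1) * ∏ i ∈ Finset.range d, a (i + 1)) := by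
  obtain ⟨e, rfl⟩ := Nat.exists_eq_add_of_le' hd
  rw [det_orderedProd_transfer, add_tsub_cancel_right, pow_succ]
  simp only [zero_add]
  ring

variable [LinearOrder R] [IsStrictOrderedRing R]

theorem orderedProd_transfer_pos {ν : ℤ} (ha : ∀ μ, ν < μ → 0 < a μ) (hb : ∀ μ, ν < μ → 0 < b μ)
    {k : ℕ} (hk : 1 ≤ k) :
    0 < orderedProd (transfer a b) ν k 0 0 ∧ 0 < orderedProd (transfer a b) ν k 0 1 ∧
      0 < orderedProd (transfer a b) ν k 1 0 ∧ 0 ≤ orderedProd (transfer a b) ν k 1 1 := by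
  induction k, hk using Nat.le_induction with
  | base => simp [orderedProd, transfer, ha (ν + 1) (by omega), hb (ν + 1) (by omega)]
  | succ k hk ih =>
    obtain ⟨h00, h01, h10, h11⟩ := ih
    have ha' := ha (ν + k + 1) (by omega)
    have hb' := hb (ν + k + 1) (by omega)
    simp only [orderedProd, transfer, mul_apply, Fin.sum_univ_two, of_apply, cons_val',
      cons_val_zero, cons_val_one, cons_val_fin_one, one_mul, zero_mul, add_zero]
    exact ⟨by positivity, by positivity, h00, h01.le⟩

theorem continuant_pos (ha : ∀ ν, 1 ≤ ν → 0 ≤ a ν) (hb : ∀ ν, 1 ≤ ν → 0 < b ν)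
    (hBm1 : 0 ≤ B (-1)) (hB0 : 0 < B 0)
    (hB : ∀ ν, 1 ≤ ν → B ν = b ν * B (ν - 1) + a ν * B (ν - 2)) {ν : ℤ} (hν : 0 ≤ ν) :
    0 < B ν := by
  suffices 0 < B ν ∧ 0 ≤ B (ν - 1) from this.1
  induction ν, hν using Int.leInduction with
  | base => exact ⟨hB0, hBm1⟩
  | succ ν hν ih =>
    rw [hB (ν + 1) (by omega), add_sub_cancel_right, show ν + 1 - 2 = ν - 1 by ring]
    have := ha (ν + 1) (by omega)
    have := hb (ν + 1) (by omega)
    exact ⟨by nlinarith, ih.1.le⟩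

theorem mul_lt_continuant_add_period (hd : 1 ≤ d) (ha : ∀ ν, 1 ≤ ν → 0 < a ν)
    (hb : ∀ ν, 1 ≤ ν → 0 < b ν) (hpa : ∀ ν, 1 ≤ ν → a (ν + d) = a ν)
    (hpb : ∀ ν, 1 ≤ ν → b (ν + d) = b ν) (hBm1 : B (-1) = 0) (hB0 : 0 < B 0)
    (hB : ∀ ν, 1 ≤ ν → B ν = b ν * B (ν - 1) + a ν * B (ν - 2)) {l m : R}
    (hsum : l + m = (orderedProd (transfer a b) 0 d).trace)
    (hprod : l * m = (orderedProd (transfer a b) 0 d).det) (hml : m ≤ l) {r : ℤ} (hr : -1 ≤ r) :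
    m * B r < B (r + d) := by
  have hBpos : ∀ ν, 0 ≤ ν → 0 < B ν :=
    fun ν ↦ continuant_pos (fun ν hν ↦ (ha ν hν).le) hb hBm1.ge hB0 hB
  rcases hr.eq_or_lt with rfl | hr
  · rw [hBm1, mul_zero]
    exact hBpos _ (by omega)
  set A := orderedProd (transfer a b) r d
  have hchar : A.charpoly = (orderedProd (transfer a b) 0 d).charpoly :=
    charpoly_orderedProd_eq hd (transfer_add_period hpa hpb) (by omega)
  obtain ⟨-, h01, h10, -⟩ :=
    orderedProd_transfer_pos (ν := r) (fun μ _ ↦ ha μ (by omega)) (fun μ _ ↦ hb μ (by omega)) hd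
  have hm : m < A 0 0 := lt_apply_zero_zero_of_add_eq_trace
    (hsum.trans (trace_eq_of_charpoly_eq hchar).symm)
    (hprod.trans (det_eq_of_charpoly_eq hchar).symm) hml (mul_pos h01 h10)
  have hstep : B (r + d) = A 0 0 * B r + A 0 1 * B (r - 1) := by
    simpa using
      (congrFun (orderedProd_transfer_mulVec (fun μ _ ↦ hB μ (by omega)) d) 0).symm
  have hBr := hBpos r (by omega)
  have hBr' : 0 ≤ B (r - 1) := by
    rcases (show -1 ≤ r - 1 by omega).eq_or_lt with h | h
    · rw [← h, hBm1]
    · exact (hBpos _ (by omega)).le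
  nlinarith

end Continuant

theorem tendsto_continuant_div_of_roots {a b B : ℤ → ℝ} {d : ℕ} (hd : 1 ≤ d)
    (ha : ∀ ν, 1 ≤ ν → 0 < a ν) (hb : ∀ ν, 1 ≤ ν → 0 < b ν)
    (hpa : ∀ ν, 1 ≤ ν → a (ν + d) = a ν) (hpb : ∀ ν, 1 ≤ ν → b (ν + d) = b ν)
    (hBm1 : B (-1) = 0) (hB0 : 0 < B 0)
    (hB : ∀ ν, 1 ≤ ν → B ν = b ν * B (ν - 1) + a ν * B (ν - 2)) {l m : ℝ}
    (hsum : l + m = (orderedProd (transfer a b) 0 d).trace)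
    (hprod : l * m = (orderedProd (transfer a b) 0 d).det) (hml : |m| < l) {r : ℤ} (hr : -1 ≤ r) :
    Tendsto (fun n : ℕ ↦ B (((n : ℤ) + 1) * d + r) / B ((n : ℤ) * d + r)) atTop (𝓝 l) := by
  have hgap := mul_lt_continuant_add_period hd ha hb hpa hpb hBm1 hB0 hB hsum hprod
    ((le_abs_self m).trans hml.le) hr
  have hrec (n : ℕ) : B (((n + 2 : ℕ) : ℤ) * d + r)
      = (l + m) * B (((n + 1 : ℕ) : ℤ) * d + r) - l * m * B (n * d + r) := by
    have h := continuant_add_two_period hd hpa hpb hB (μ := n * d + r)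
      (le_add_of_nonneg_of_le (by positivity) hr)
    push_cast
    rwa [show ((n : ℤ) + 2) * d + r = n * d + r + 2 * d by ring,
      show ((n : ℤ) + 1) * d + r = n * d + r + d by ring, hsum, hprod]
  have hml' : ‖m‖ < ‖l‖ := by
    rwa [Real.norm_eq_abs, Real.norm_eq_abs, abs_of_pos ((abs_nonneg m).trans_lt hml)]
  simpa using tendsto_succ_div_of_recurrence (y := fun n : ℕ ↦ B (n * d + r)) hml' hrec
    (by simpa [add_comm] using hgap.ne')

theorem tendsto_continuant_div {a b B : ℤ → ℝ} {d : ℕ} (hd : 1 ≤ d) (ha : ∀ ν, 1 ≤ ν → 0 < a ν)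
    (hb : ∀ ν, 1 ≤ ν → 0 < b ν) (hpa : ∀ ν, 1 ≤ ν → a (ν + d) = a ν)
    (hpb : ∀ ν, 1 ≤ ν → b (ν + d) = b ν) (hBm1 : B (-1) = 0) (hB0 : 0 < B 0)
    (hB : ∀ ν, 1 ≤ ν → B ν = b ν * B (ν - 1) + a ν * B (ν - 2)) {C D : ℝ}
    (hC : B (d - 1) * C = B (2 * d - 1))
    (hD : D = (-1) ^ (d - 1) * ∏ i ∈ Finset.range d, a (i + 1)) (hΔ : 0 < C ^ 2 + 4 * D)
    {r : ℤ} (hr : -1 ≤ r) :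
    Tendsto (fun n : ℕ ↦ B (((n : ℤ) + 1) * d + r) / B ((n : ℤ) * d + r)) atTop
      (𝓝 ((C + √(C ^ 2 + 4 * D)) / 2)) := by
  have hBpos : ∀ ν, 0 ≤ ν → 0 < B ν :=
    fun ν ↦ continuant_pos (fun ν hν ↦ (ha ν hν).le) hb hBm1.ge hB0 hB
  have hBd := hBpos (d - 1) (by omega)
  have hCpos : 0 < C := pos_of_mul_pos_right (hC ▸ hBpos _ (by omega)) hBd.le
  have hs := Real.sq_sqrt hΔ.le
  have hs' := Real.sqrt_pos.mpr hΔ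
  refine tendsto_continuant_div_of_roots hd ha hb hpa hpb hBm1 hB0 hB
    (m := (C - √(C ^ 2 + 4 * D)) / 2) ?_ ?_ ?_ hr
  · rw [trace_orderedProd_transfer_zero hd hpa hpb hB hBm1 hBd.ne' hC]
    ring
  · rw [det_orderedProd_transfer_zero hd, ← hD]
    linear_combination (-1 / 4) * hs
  · rw [abs_lt]
    constructor <;> linarith

theorem limit_consecutive_periods_general
    (d : ℕ) (hd : 1 ≤ d) (a b : ℤ → ℤ)
    (ha : ∀ ν : ℤ, 1 ≤ ν → 0 < a ν) (hb : ∀ ν : ℤ, 1 ≤ ν → 0 < b ν)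
    (hpa : ∀ ν : ℤ, 1 ≤ ν → a (ν + d) = a ν) (hpb : ∀ ν : ℤ, 1 ≤ ν → b (ν + d) = b ν)
    (B : ℤ → ℤ) (hBm1 : B (-1) = 0) (hB0 : B 0 = 1)
    (hBrec : ∀ ν : ℤ, 1 ≤ ν → B ν = b ν * B (ν - 1) + a ν * B (ν - 2))
    (Cd Dd Δ : ℤ)
    (hC : B ((d : ℤ) - 1) * Cd = B (2 * (d : ℤ) - 1))
    (hD : Dd = (-1 : ℤ) ^ (d - 1) * ∏ i ∈ Finset.range d, a ((i : ℤ) + 1))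
    (hΔ : Δ = Cd ^ 2 + 4 * Dd) (hΔpos : 0 < Δ)
    (β : ℝ)
    (hβ : β = (-(Cd : ℝ) - Real.sqrt (Δ : ℝ)) / (2 * (Dd : ℝ))) :
    ∀ r : ℤ, -1 ≤ r →
      Filter.Tendsto
        (fun n : ℕ => (B (((n : ℤ) + 1) * d + r) : ℝ) / (B ((n : ℤ) * d + r) : ℝ))
        Filter.atTop
        (nhds (-(Dd : ℝ) * β)) := by
  intro r hr
  have hΔR : (Δ : ℝ) = Cd ^ 2 + 4 * Dd := by exact_mod_cast hΔ
  have hDd : (Dd : ℝ) ≠ 0 := by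
    rw [hD]
    exact_mod_cast mul_ne_zero (pow_ne_zero _ (by norm_num))
      (Finset.prod_pos fun i _ ↦ ha _ (by omega)).ne'
  have hlim : -(Dd : ℝ) * β = (Cd + √(Cd ^ 2 + 4 * Dd)) / 2 := by
    rw [hβ, hΔR]
    field_simp
    ring
  rw [hlim]
  exact tendsto_continuant_div (a := fun ν ↦ (a ν : ℝ)) (b := fun ν ↦ (b ν : ℝ))
    (B := fun ν ↦ (B ν : ℝ)) hd (fun ν hν ↦ by exact_mod_cast ha ν hν)
    (fun ν hν ↦ by exact_mod_cast hb ν hν) (fun ν hν ↦ by simp [hpa ν hν])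
    (fun ν hν ↦ by simp [hpb ν hν]) (by simp [hBm1]) (by simp [hB0])
    (fun ν hν ↦ by exact_mod_cast hBrec ν hν) (by exact_mod_cast hC) (by exact_mod_cast hD)
    (hΔR ▸ by exact_mod_cast hΔpos) hr

/-- Limit of ratios of terms one period apart for the periodic continuant denominators. -/
theorem limit_consecutive_periods
    (d : ℕ) (hd : 1 ≤ d) (a b : ℤ → ℤ)
    (ha : ∀ ν : ℤ, 1 ≤ ν → 0 < a ν) (hb : ∀ ν : ℤ, 1 ≤ ν → 0 < b ν)
    (hpa : ∀ ν : ℤ, 1 ≤ ν → a (ν + d) = a ν) (hpb : ∀ ν : ℤ, 1 ≤ ν → b (ν + d) = b ν)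
    (B : ℤ → ℤ) (hBm1 : B (-1) = 0) (hB0 : B 0 = 1)
    (hBrec : ∀ ν : ℤ, 1 ≤ ν → B ν = b ν * B (ν - 1) + a ν * B (ν - 2))
    (Cd Dd Δ : ℤ)
    (hC : B ((d : ℤ) - 1) * Cd = B (2 * (d : ℤ) - 1))
    (hD : Dd = (-1 : ℤ) ^ (d - 1) * ∏ i ∈ Finset.range d, a ((i : ℤ) + 1))
    (hΔ : Δ = Cd ^ 2 + 4 * Dd) (hΔpos : 0 < Δ)
    (α β : ℝ)
    (hα : α = (-(Cd : ℝ) + Real.sqrt (Δ : ℝ)) / (2 * (Dd : ℝ)))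
    (hβ : β = (-(Cd : ℝ) - Real.sqrt (Δ : ℝ)) / (2 * (Dd : ℝ))) :
    ∀ r : ℤ, -1 ≤ r →
      Filter.Tendsto
        (fun n : ℕ => (B (((n : ℤ) + 1) * d + r) : ℝ) / (B ((n : ℤ) * d + r) : ℝ))
        Filter.atTop
        (nhds (-(Dd : ℝ) * β)) :=
  limit_consecutive_periods_general d hd a b ha hb hpa hpb B hBm1 hB0 hBrec Cd Dd Δ hC hD hΔ hΔpos β
    hβ
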